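/- Let S be a bisection, u a vertex of minimum rank ℓ in S̄, and T the bisection associated with a u-pair (A_u,B_u). If y is an obstruction for T, then def_S(y) ≤ −a_y + 2·rank_S(u) − 3. -/

import Mathlib

open Finset

/-- Number of neighbors of `x` in the set `A` (i.e. `W(x, A)`). -/
def nbrs {V : Type*} [DecidableEq V] (G : SimpleGraph V) [DecidableRel G.Adj]
    (x : V) (A : Finset V) : ℕ :=
  (A.filter (G.Adj x)).card

/-- Number of edges between the (disjoint) sets `A` and `B` (i.e. `W(A, B)`). -/
def ew {V : Type*} [DecidableEq V] (G : SimpleGraph V) [DecidableRel G.Adj]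
    (A B : Finset V) : ℕ :=
  ∑ x ∈ A, nbrs G x B

/-- Deficiency of `x` with respect to the bisection whose larger side is `S`:
`W(x,S) - W(x,S̄)` if `x ∈ S`, and `W(x,S̄) - W(x,S)` otherwise. -/
def defc {V : Type*} [Fintype V] [DecidableEq V] (G : SimpleGraph V)
    [DecidableRel G.Adj] (S : Finset V) (x : V) : ℤ :=
  if x ∈ S then (nbrs G x S : ℤ) - (nbrs G x Sᶜ : ℤ)
  else (nbrs G x Sᶜ : ℤ) - (nbrs G x S : ℤ)

/-- Potential of the bisection `(S, S̄)`:
`Φ(S,S̄) = W(S,S̄) + (1/2)(Σ_{x∈S} a_x − Σ_{y∈S̄} a_y)`. -/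
def pot {V : Type*} [Fintype V] [DecidableEq V] (G : SimpleGraph V)
    [DecidableRel G.Adj] (a : V → ℕ) (S : Finset V) : ℚ :=
  (ew G S Sᶜ : ℚ) + (∑ x ∈ S, (a x : ℚ) - ∑ y ∈ Sᶜ, (a y : ℚ)) / 2

/-- Rank of `u` with respect to the bisection `S`:
`rank_S(u) = ⌈(a_u + 1 − def_S(u)) / 2⌉`. -/
def rk {V : Type*} [Fintype V] [DecidableEq V] (G : SimpleGraph V)
    [DecidableRel G.Adj] (a : V → ℕ) (S : Finset V) (u : V) : ℤ :=
  ⌈((((a u : ℤ) + 1 - defc G S u : ℤ) : ℚ)) / 2⌉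

/-- A vertex `u` is stubborn if `a_u ≥ min {d(u), n − d(u) − 1}`. -/
def Stubborn {V : Type*} [Fintype V] [DecidableEq V] (G : SimpleGraph V)
    [DecidableRel G.Adj] (a : V → ℕ) (u : V) : Prop :=
  min (G.degree u : ℤ) ((Fintype.card V : ℤ) - (G.degree u : ℤ) - 1) ≤ (a u : ℤ)

/-- A `u`-pair `(A, B)` for the bisection `S`:
if `u ∈ S`, `A ⊆ S ∩ N̄(u)`, `B ⊆ S̄ ∩ N(u)` with `|A| = |B| = rank_S(u)`;
if `u ∈ S̄`, `A ⊆ S ∩ N(u)`, `B ⊆ S̄ ∩ N̄(u)` with `|A| = rank_S(u)` and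
`|B| = rank_S(u) − 1` (the vertex `u` itself is not moved). -/
def IsUPair {V : Type*} [Fintype V] [DecidableEq V] (G : SimpleGraph V)
    [DecidableRel G.Adj] (a : V → ℕ) (S : Finset V) (u : V)
    (A B : Finset V) : Prop :=
  if u ∈ S then
    A ⊆ S ∧ (∀ v ∈ A, ¬ G.Adj u v) ∧ u ∉ A ∧
    B ⊆ Sᶜ ∧ (∀ v ∈ B, G.Adj u v) ∧
    (A.card : ℤ) = rk G a S u ∧ (B.card : ℤ) = rk G a S u
  else
    A ⊆ S ∧ (∀ v ∈ A, G.Adj u v) ∧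
    B ⊆ Sᶜ ∧ (∀ v ∈ B, ¬ G.Adj u v) ∧ u ∉ B ∧
    (A.card : ℤ) = rk G a S u ∧ (B.card : ℤ) = rk G a S u - 1

/-- The larger side of the bisection associated with a `u`-pair `(A, B)`:
`S ∖ A ∪ B` if `u ∈ S`, and `S̄ ∖ B ∪ A` if `u ∈ S̄`. -/
def assoc {V : Type*} [Fintype V] [DecidableEq V] (S : Finset V) (u : V)
    (A B : Finset V) : Finset V :=
  if u ∈ S then (S \ A) ∪ B else (Sᶜ \ B) ∪ A

/-! Moving `A` into `S̄` and `B` out of it changes `W(y,S̄) − W(y,S)` by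
`2 W(y,A) − 2 W(y,B) ≥ −2 (rank_S(u) − 1)`, which is the bound for `y ∈ S̄ ∖ B`.
A vertex `y ∈ A` cannot be an obstruction for `T`: a stubborn vertex never is one on the
larger side of a bisection, and otherwise the same estimate gives `rank_S(y) < rank_S(u)`. -/

section Neighbours

variable {V : Type*} [DecidableEq V] (G : SimpleGraph V) [DecidableRel G.Adj] (x : V)

lemma nbrs_le_card (X : Finset V) : nbrs G x X ≤ X.card :=
  card_le_card (filter_subset _ _)

lemma nbrs_union {X Y : Finset V} (h : Disjoint X Y) :
    nbrs G x (X ∪ Y) = nbrs G x X + nbrs G x Y := by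
  rw [nbrs, filter_union, card_union_of_disjoint (disjoint_filter_filter h)]
  rfl

lemma nbrs_sdiff_union {X A B : Finset V} (hB : B ⊆ X) (hA : Disjoint X A) :
    (nbrs G x (X \ B ∪ A) : ℤ) = nbrs G x X - nbrs G x B + nbrs G x A := by
  have hsplit := nbrs_union G x ((sdiff_disjoint : Disjoint (X \ B) B))
  rw [sdiff_union_of_subset hB] at hsplit
  rw [nbrs_union G x (disjoint_of_subset_left sdiff_subset hA)]
  omega

lemma nbrs_add_nbrs_compl [Fintype V] (S : Finset V) :
    nbrs G x S + nbrs G x Sᶜ = G.degree x := by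
  rw [← nbrs_union G x disjoint_compl_right, union_compl, nbrs,
    ← SimpleGraph.neighborFinset_eq_filter, SimpleGraph.card_neighborFinset_eq_degree]

end Neighbours

section Deficiency

variable {V : Type*} [Fintype V] [DecidableEq V] (G : SimpleGraph V) [DecidableRel G.Adj]

lemma defc_of_mem {S : Finset V} {x : V} (hx : x ∈ S) :
    defc G S x = nbrs G x S - nbrs G x Sᶜ :=
  if_pos hx

lemma defc_of_notMem {S : Finset V} {x : V} (hx : x ∉ S) :
    defc G S x = nbrs G x Sᶜ - nbrs G x S :=
  if_neg hx

lemma rk_le_iff (a : V → ℕ) (S : Finset V) (x : V) (k : ℤ) :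
    rk G a S x ≤ k ↔ a x + 1 - defc G S x ≤ 2 * k := by
  rw [rk, Int.ceil_le, div_le_iff₀ two_pos, mul_comm]
  norm_cast

lemma neg_le_defc_of_stubborn (a : V → ℕ) {T : Finset V}
    (hT : Fintype.card V + 1 ≤ 2 * T.card) {y : V} (hy : y ∈ T) (hst : Stubborn G a y) :
    -(a y : ℤ) ≤ defc G T y := by
  have hdeg := nbrs_add_nbrs_compl G y T
  have hcompl := nbrs_le_card G y Tᶜ
  have hcard := card_add_card_compl T
  rw [defc_of_mem G hy]
  unfold Stubborn at hst
  omega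

end Deficiency

section Swap

variable {V : Type*} [Fintype V] [DecidableEq V] {S A B : Finset V}

lemma compl_sdiff_union_of_subset (hA : A ⊆ S) (hB : B ⊆ Sᶜ) :
    (Sᶜ \ B ∪ A)ᶜ = S \ A ∪ B := by
  ext v
  have hAv : v ∈ A → v ∈ S := fun h => hA h
  have hBv : v ∈ B → v ∉ S := fun h => mem_compl.mp (hB h)
  simp only [mem_compl, mem_union, mem_sdiff]
  tauto

lemma card_sdiff_union_add_card (hA : A ⊆ S) (hB : B ⊆ Sᶜ) :
    (Sᶜ \ B ∪ A).card + B.card = Sᶜ.card + A.card := by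
  rw [card_union_of_disjoint (disjoint_of_subset_left sdiff_subset
    (disjoint_compl_left.mono_right hA)), add_right_comm, card_sdiff_add_card_eq_card hB]

lemma nbrs_sub_nbrs_compl_swap (G : SimpleGraph V) [DecidableRel G.Adj] (y : V)
    (hA : A ⊆ S) (hB : B ⊆ Sᶜ) :
    (nbrs G y (Sᶜ \ B ∪ A) : ℤ) - nbrs G y (Sᶜ \ B ∪ A)ᶜ
      = nbrs G y Sᶜ - nbrs G y S + 2 * nbrs G y A - 2 * nbrs G y B := by
  rw [compl_sdiff_union_of_subset hA hB,
    nbrs_sdiff_union G y hB (disjoint_compl_left.mono_right hA),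
    nbrs_sdiff_union G y hA (disjoint_compl_right.mono_right hB)]
  ring

end Swap

theorem stmt11_general {V : Type*} [Fintype V] [DecidableEq V]
    (G : SimpleGraph V) [DecidableRel G.Adj] (a : V → ℕ)
    (S : Finset V) (hbis : 2 * S.card = Fintype.card V + 1)
    (u : V) (hu : u ∉ S)
    (hminrank : ∀ v : V, ¬ Stubborn G a v → rk G a S u ≤ rk G a S v)
    (A B : Finset V) (hpair : IsUPair G a S u A B)
    (y : V) (hyT : y ∈ assoc S u A B)
    (hobs : defc G (assoc S u A B) y < -(a y : ℤ)) :
    defc G S y ≤ -(a y : ℤ) + 2 * rk G a S u - 3 := by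
  rw [IsUPair, if_neg hu] at hpair
  obtain ⟨hAS, -, hBS, -, -, hcardA, hcardB⟩ := hpair
  rw [assoc, if_neg hu] at hyT hobs
  rw [defc_of_mem G hyT, nbrs_sub_nbrs_compl_swap G y hAS hBS] at hobs
  have hyB := nbrs_le_card G y B
  rcases mem_union.mp hyT with hyS | hyA
  · rw [defc_of_notMem G (mem_compl.mp (mem_sdiff.mp hyS).1)]
    omega
  · have hyS : y ∈ S := hAS hyA
    by_cases hst : Stubborn G a y
    · have hTcard : Fintype.card V + 1 ≤ 2 * (Sᶜ \ B ∪ A).card := by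
        have hcard := card_sdiff_union_add_card hAS hBS
        rw [card_compl] at hcard
        omega
      have hstub := neg_le_defc_of_stubborn G a hTcard hyT hst
      rw [defc_of_mem G hyT, nbrs_sub_nbrs_compl_swap G y hAS hBS] at hstub
      omega
    · have hrk : rk G a S y ≤ rk G a S u - 1 := by
        rw [rk_le_iff, defc_of_mem G hyS]
        omega
      linarith [hminrank y hst]

/-- Lemma 7, first part: Let `u ∈ S̄` be a non-stubborn vertex of
minimum rank for the bisection `S` and `T` the bisection associated with a
`u`-pair `(A_u, B_u)`. If `y` is an obstruction for `T`, then
`def_S(y) ≤ −a_y + 2·rank_S(u) − 3`. -/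
theorem stmt11 {V : Type*} [Fintype V] [DecidableEq V]
    (G : SimpleGraph V) [DecidableRel G.Adj] (a : V → ℕ)
    (hodd : Odd (Fintype.card V))
    (S : Finset V) (hbis : 2 * S.card = Fintype.card V + 1)
    (u : V) (hu : u ∉ S) (hns : ¬ Stubborn G a u)
    (hminrank : ∀ v : V, ¬ Stubborn G a v → rk G a S u ≤ rk G a S v)
    (A B : Finset V) (hpair : IsUPair G a S u A B)
    (y : V) (hyT : y ∈ assoc S u A B)
    (hobs : defc G (assoc S u A B) y < -(a y : ℤ)) :
    defc G S y ≤ -(a y : ℤ) + 2 * rk G a S u - 3 :=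
  stmt11_general G a S hbis u hu hminrank A B hpair y hyT hobs
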